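/- arXiv:0912.2151 — 4 statements merged into one kernel-verified Lean document; each statement's English description precedes it below -/
import Mathlib

section
/- Let Δ be a Gorenstein* simplicial complex. If e is a vertex of Δ and σ ∈ Δ is a face not containing e, then there exists a facet of Δ that contains σ and does not contain e. -/
set_option synthInstance.maxHeartbeats 1000000
set_option maxHeartbeats 1000000

open MvPolynomial
/-- An (abstract) simplicial complex on the vertex set `{1, …, m}` (modeled as `Fin m`):
a collection of finite subsets containing all singletons and closed under taking subsets. -/
def IsComplex {m : ℕ} (Δ : Set (Finset (Fin m))) : Prop :=
  (∀ i : Fin m, {i} ∈ Δ) ∧ ∀ ⦃s⦄, s ∈ Δ → ∀ ⦃t : Finset (Fin m)⦄, t ⊆ s → t ∈ Δ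

/-- Facets: faces maximal under inclusion. -/
def IsFacet {m : ℕ} (Δ : Set (Finset (Fin m))) (τ : Finset (Fin m)) : Prop :=
  τ ∈ Δ ∧ ∀ ρ ∈ Δ, τ ⊆ ρ → τ = ρ

/-- A complex is pure if all facets have the same cardinality. -/
def IsPure {m : ℕ} (Δ : Set (Finset (Fin m))) : Prop :=
  ∀ τ ρ, IsFacet Δ τ → IsFacet Δ ρ → τ.card = ρ.card

/-- The link of a face `σ`. -/
def link {m : ℕ} (Δ : Set (Finset (Fin m))) (σ : Finset (Fin m)) :
    Set (Finset (Fin m)) :=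
  {τ | Disjoint τ σ ∧ τ ∪ σ ∈ Δ}

/-- One more than the dimension of `Δ`: the largest cardinality of a face. -/
noncomputable def topCard {m : ℕ} (Δ : Set (Finset (Fin m))) : ℕ :=
  sSup ((fun σ : Finset (Fin m) => σ.card) '' Δ)

/-- The space of simplicial `c`-chains (indexed by cardinality `c`; the empty set is
the unique "(-1)-dimensional" chain generator, giving *reduced* chains). -/
abbrev SChain (k : Type*) [Field k] (m c : ℕ) : Type _ :=
  {σ : Finset (Fin m) // σ.card = c} →₀ k

/-- The simplicial boundary map on chains of cardinality `c`. -/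
noncomputable def sBdry (k : Type*) [Field k] (m c : ℕ) :
    SChain k m c →ₗ[k] SChain k m (c - 1) :=
  Finsupp.lsum k fun σ => LinearMap.toSpanSingleton k _
    (∑ j ∈ σ.1.attach, ((-1 : k) ^ ((σ.1.filter (fun a => a < j.1)).card)) •
      Finsupp.single ⟨σ.1.erase j.1, by rw [Finset.card_erase_of_mem j.2, σ.2]⟩ 1)

/-- Chains supported on faces of `Δ`. -/
noncomputable def faceSpan (k : Type*) [Field k] {m : ℕ} (Δ : Set (Finset (Fin m)))
    (c : ℕ) : Submodule k (SChain k m c) :=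
  Submodule.span k
    {x | ∃ σ : {σ : Finset (Fin m) // σ.card = c}, σ.1 ∈ Δ ∧ x = Finsupp.single σ 1}

/-- Reduced simplicial homology of `Δ` (with coefficients in `k`) in chain-cardinality `c`,
i.e. `H̃_{c-1}(Δ; k)`. -/
noncomputable abbrev sCycles (k : Type*) [Field k] {m : ℕ} (Δ : Set (Finset (Fin m)))
    (c : ℕ) : Submodule k (SChain k m c) :=
  LinearMap.ker (sBdry k m c) ⊓ faceSpan k Δ c

noncomputable def redHomology (k : Type*) [Field k] {m : ℕ} (Δ : Set (Finset (Fin m)))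
    (c : ℕ) : Type _ :=
  letI : HasQuotient (sCycles k Δ c) (Submodule k (sCycles k Δ c)) := by exact @Submodule.hasQuotient k (sCycles k Δ c) _ _ _
  (sCycles k Δ c) ⧸
    (Submodule.comap (sCycles k Δ c).subtype
      (Submodule.map (sBdry k m (c + 1)) (faceSpan k Δ (c + 1))))

noncomputable instance (k : Type*) [Field k] {m : ℕ} (Δ : Set (Finset (Fin m))) (c : ℕ) :
    AddCommGroup (redHomology k Δ c) := by unfold redHomology; infer_instance

noncomputable instance (k : Type*) [Field k] {m : ℕ} (Δ : Set (Finset (Fin m))) (c : ℕ) :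
    Module k (redHomology k Δ c) := by unfold redHomology; infer_instance

/-- `Δ` is Gorenstein* over `k`: for every face `σ` the link of `σ` has the reduced homology
of a sphere of dimension `dim lk(σ)`.  (Chain-cardinality `c` corresponds to dimension
`c - 1`, and `topCard` is `dim + 1`.) -/
def IsGorensteinStar (k : Type*) [Field k] {m : ℕ} (Δ : Set (Finset (Fin m))) : Prop :=
  ∀ σ ∈ Δ, ∀ c : ℕ,
    Module.rank k (redHomology k (link Δ σ) c) =
      if c = topCard (link Δ σ) then 1 else 0

/-!
Suppose every facet through `σ` contains `e`. Then the link of `σ` is a cone with apex `e`: adding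
`e` to any of its faces stays inside it. In particular every face of maximal cardinality `c` of the
link contains `e`, and a `c`-cycle `z` of the link must vanish: for such a face `τ` the coefficient
of `τ \ {e}` in `∂z` is `±z(τ)`, because `τ` is the only face containing `e` whose boundary meets
`τ \ {e}`. So the top reduced homology of the link is zero, while Gorenstein* says it is `k`.
-/

open Finset

section Complexes

variable {m : ℕ}

lemma exists_isFacet_superset {Δ : Set (Finset (Fin m))} {σ : Finset (Fin m)} (hσ : σ ∈ Δ) :
    ∃ τ, IsFacet Δ τ ∧ σ ⊆ τ := by
  obtain ⟨τ, hστ, hτ⟩ := Δ.toFinite.exists_le_maximal hσ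
  exact ⟨τ, ⟨hτ.prop, fun ρ hρ hτρ => le_antisymm hτρ (hτ.2 hρ hτρ)⟩, hστ⟩

lemma card_le_topCard {Δ : Set (Finset (Fin m))} {τ : Finset (Fin m)} (hτ : τ ∈ Δ) :
    τ.card ≤ topCard Δ :=
  le_csSup ⟨m, by rintro _ ⟨ρ, -, rfl⟩; simpa using card_le_univ ρ⟩ ⟨τ, hτ, rfl⟩

lemma insert_mem_link {Δ : Set (Finset (Fin m))}
    (hΔ : ∀ ⦃s⦄, s ∈ Δ → ∀ ⦃t : Finset (Fin m)⦄, t ⊆ s → t ∈ Δ) {σ : Finset (Fin m)} {e : Fin m}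
    (heσ : e ∉ σ) (hfacet : ∀ τ, IsFacet Δ τ → σ ⊆ τ → e ∈ τ) {τ : Finset (Fin m)}
    (hτ : τ ∈ link Δ σ) : insert e τ ∈ link Δ σ := by
  obtain ⟨hτσ, hτσΔ⟩ := hτ
  obtain ⟨F, hF, hτσF⟩ := exists_isFacet_superset hτσΔ
  have heF : e ∈ F := hfacet F hF (subset_union_right.trans hτσF)
  refine ⟨disjoint_insert_left.2 ⟨heσ, hτσ⟩, hΔ hF.1 ?_⟩
  rw [insert_union]
  exact insert_subset heF hτσF

lemma mem_of_card_eq_topCard {L : Set (Finset (Fin m))} {e : Fin m}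
    (hcone : ∀ τ ∈ L, insert e τ ∈ L) {τ : Finset (Fin m)} (hτ : τ ∈ L)
    (hcard : τ.card = topCard L) : e ∈ τ := by
  by_contra heτ
  have := card_le_topCard (hcone τ hτ)
  rw [card_insert_of_notMem heτ] at this
  omega

lemma eq_and_eq_of_erase_eq_erase {α : Type*} [DecidableEq α] {s t : Finset α} {a b : α}
    (ha : a ∈ s) (ht : a ∈ t) (h : s.erase b = t.erase a) : b = a ∧ s = t := by
  have hba : b = a := by
    by_contra hba
    simpa [h] using mem_erase.2 ⟨Ne.symm hba, ha⟩
  subst hba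
  exact ⟨rfl, erase_injOn' b ha ht h⟩

lemma faceSpan_eq_supported (k : Type*) [Field k] (Δ : Set (Finset (Fin m))) (c : ℕ) :
    faceSpan k Δ c = Finsupp.supported k k {σ | σ.1 ∈ Δ} := by
  rw [Finsupp.supported_eq_span_single, faceSpan]
  congr 1
  ext x
  simp [eq_comm]

section Boundary

variable (k : Type*) [Field k] {c : ℕ}

lemma sBdry_single_apply_erase {τ τ₀ : {σ : Finset (Fin m) // σ.card = c}} {e : Fin m}
    (he : e ∈ τ.1) (he₀ : e ∈ τ₀.1) :
    sBdry k m c (Finsupp.single τ 1) ⟨τ₀.1.erase e, by rw [card_erase_of_mem he₀, τ₀.2]⟩ =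
      if τ = τ₀ then (-1) ^ (τ₀.1.filter (· < e)).card else 0 := by
  rw [sBdry, Finsupp.lsum_single, LinearMap.toSpanSingleton_apply, one_smul, Finset.sum_apply']
  simp only [Finsupp.smul_apply, Finsupp.single_apply, Subtype.mk.injEq, smul_eq_mul, mul_ite,
    mul_one, mul_zero]
  split_ifs with hττ₀
  · subst hττ₀
    rw [Finset.sum_eq_single_of_mem ⟨e, he⟩ (mem_attach _ _), if_pos rfl]
    rintro j - hje
    rw [if_neg fun h => hje (Subtype.ext (eq_and_eq_of_erase_eq_erase he he₀ h).1)]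
  · refine Finset.sum_eq_zero fun j _ => if_neg fun h => hττ₀ ?_
    exact Subtype.ext (eq_and_eq_of_erase_eq_erase he he₀ h).2

lemma sBdry_apply_erase {z : SChain k m c} {e : Fin m} (hz : ∀ τ ∈ z.support, e ∈ τ.1)
    {τ₀ : {σ : Finset (Fin m) // σ.card = c}} (he₀ : e ∈ τ₀.1) :
    sBdry k m c z ⟨τ₀.1.erase e, by rw [card_erase_of_mem he₀, τ₀.2]⟩ =
      z τ₀ * (-1) ^ (τ₀.1.filter (· < e)).card := by
  have hsum : sBdry k m c z = ∑ τ ∈ z.support, z τ • sBdry k m c (Finsupp.single τ 1) := by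
    conv_lhs => rw [← Finsupp.sum_single z, Finsupp.sum]
    simp only [map_sum, ← map_smul, Finsupp.smul_single_one]
  rw [hsum, Finset.sum_apply']
  simp_rw [Finsupp.smul_apply]
  rw [Finset.sum_congr rfl fun τ hτ => by rw [sBdry_single_apply_erase k (hz τ hτ) he₀]]
  simp only [smul_eq_mul, mul_ite, mul_zero, Finset.sum_ite_eq']
  exact ite_eq_left_iff.2 fun hτ₀ => by rw [Finsupp.notMem_support_iff.1 hτ₀, zero_mul]

lemma eq_zero_of_sBdry_eq_zero {z : SChain k m c} {e : Fin m} (hz : ∀ τ ∈ z.support, e ∈ τ.1)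
    (hbdry : sBdry k m c z = 0) : z = 0 := by
  ext τ₀
  by_cases he₀ : e ∈ τ₀.1
  · simpa [hbdry] using (sBdry_apply_erase k hz he₀).symm
  · exact Finsupp.notMem_support_iff.1 fun hτ₀ => he₀ (hz τ₀ hτ₀)

lemma sCycles_eq_bot_of_forall_mem {L : Set (Finset (Fin m))} {e : Fin m}
    (hL : ∀ τ ∈ L, τ.card = c → e ∈ τ) : sCycles k L c = ⊥ := by
  refine eq_bot_iff.2 fun z ⟨hker, hspan⟩ =>
    eq_zero_of_sBdry_eq_zero k (e := e) (fun τ hτ => ?_) hker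
  rw [faceSpan_eq_supported] at hspan
  exact hL τ.1 (hspan hτ) τ.2

lemma rank_redHomology_eq_zero_of_sCycles_eq_bot {L : Set (Finset (Fin m))}
    (h : sCycles k L c = ⊥) : Module.rank k (redHomology k L c) = 0 := by
  have : Subsingleton (sCycles k L c) := by rw [h]; infer_instance
  have : Subsingleton (redHomology k L c) := by unfold redHomology; infer_instance
  exact rank_subsingleton' k _

end Boundary

end Complexes

theorem exists_facet_containing_avoiding_general (k : Type*) [Field k] {m : ℕ}
    (Δ : Set (Finset (Fin m))) (hΔ : IsComplex Δ) (hG : IsGorensteinStar k Δ)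
    (e : Fin m)
    (σ : Finset (Fin m)) (hσ : σ ∈ Δ) (heσ : e ∉ σ) :
    ∃ τ : Finset (Fin m), IsFacet Δ τ ∧ σ ⊆ τ ∧ e ∉ τ := by
  by_contra! hfacet
  have hcone : ∀ τ ∈ link Δ σ, insert e τ ∈ link Δ σ :=
    fun _ => insert_mem_link hΔ.2 heσ hfacet
  have hcycles : sCycles k (link Δ σ) (topCard (link Δ σ)) = ⊥ :=
    sCycles_eq_bot_of_forall_mem k fun _ hτ => mem_of_card_eq_topCard hcone hτ
  have hrank := hG σ hσ (topCard (link Δ σ))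
  rw [if_pos rfl, rank_redHomology_eq_zero_of_sCycles_eq_bot k hcycles] at hrank
  exact zero_ne_one hrank

/-- in a Gorenstein* complex, for a vertex `e` and a face `σ` not containing
`e` there is a facet containing `σ` and not containing `e`. -/
theorem exists_facet_containing_avoiding (k : Type*) [Field k] {m : ℕ}
    (Δ : Set (Finset (Fin m))) (hΔ : IsComplex Δ) (hG : IsGorensteinStar k Δ)
    (e : Fin m) (he : ({e} : Finset (Fin m)) ∈ Δ)
    (σ : Finset (Fin m)) (hσ : σ ∈ Δ) (heσ : e ∉ σ) :
    ∃ τ : Finset (Fin m), IsFacet Δ τ ∧ σ ⊆ τ ∧ e ∉ τ :=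
  exists_facet_containing_avoiding_general k Δ hΔ hG e σ hσ heσ
end

section
/- Let Δ = {∅,{1},{2},{3},{1,2},{1,3}} and σ = {1,2}. Then in k[Δ] = k[x₁,x₂,x₃]/(x₂x₃) one has J_σ = (0 : x₁x₂) = (x₃) and (0 : J_σ) = (x₂) ≠ (x₁x₂). In particular, the conclusion (0 : J_σ) = (x_σ) fails when k[Δ] is merely Gorenstein (and Δ is acyclic). -/
set_option synthInstance.maxHeartbeats 1000000
set_option maxHeartbeats 1000000

open MvPolynomial
/-- The square-free monomial with support `ρ`. -/
noncomputable def xmon (k : Type*) [Field k] {m : ℕ} (ρ : Finset (Fin m)) :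
    MvPolynomial (Fin m) k := ∏ i ∈ ρ, X i

/-- The Stanley–Reisner ideal of `Δ`: generated by the square-free monomials of non-faces. -/
noncomputable def srIdeal (k : Type*) [Field k] {m : ℕ} (Δ : Set (Finset (Fin m))) :
    Ideal (MvPolynomial (Fin m) k) :=
  Ideal.span ((fun ρ => xmon k ρ) '' {ρ : Finset (Fin m) | ρ ∉ Δ})

/-- The Stanley–Reisner ring `k[Δ]`. -/
abbrev SR (k : Type*) [Field k] {m : ℕ} (Δ : Set (Finset (Fin m))) :=
  MvPolynomial (Fin m) k ⧸ srIdeal k Δ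

/-- The class of the monomial `x_σ` in `k[Δ]`. -/
noncomputable def xcls (k : Type*) [Field k] {m : ℕ} (Δ : Set (Finset (Fin m)))
    (σ : Finset (Fin m)) : SR k Δ :=
  Ideal.Quotient.mk (srIdeal k Δ) (xmon k σ)

/-- `J_σ = (0 : x_σ)`, the annihilator of `x_σ` in `k[Δ]`. -/
noncomputable def Jσ (k : Type*) [Field k] {m : ℕ} (Δ : Set (Finset (Fin m)))
    (σ : Finset (Fin m)) : Ideal (SR k Δ) :=
  (⊥ : Ideal (SR k Δ)).colon (Ideal.span {xcls k Δ σ})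


/-- The complex `Δ = {∅,{1},{2},{3},{1,2},{1,3}}` (vertices `1,2,3` modeled as `0,1,2`). -/
def Δex : Set (Finset (Fin 3)) := {∅, {0}, {1}, {2}, {0, 1}, {0, 2}}

/-!
Since `{2,3}` is the unique minimal non-face, `k[Δ] = k[x₁,x₂,x₃]/(x₂x₃)`. Over a domain, the
annihilator of `u * a` in `R ⧸ (a * b)` is `(b)` whenever `b` is prime and `b ∤ u`; with
`(a, b, u) = (x₂, x₃, x₁)` this gives `J_σ = (x₃)`, and with `(x₃, x₂, 1)` it gives
`(0 : J_σ) = (x₂)`. Finally `(x₂) ≠ (x₁x₂)`, as evaluation at the point `(0, 1, 0)` of `V(x₂x₃)`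
shows.
-/

open Ideal

theorem mk_mem_span_mk_iff {R : Type*} [CommRing R] {I : Ideal R} {g : R} (hI : I ≤ span {g})
    (f : R) : Ideal.Quotient.mk I f ∈ span {Ideal.Quotient.mk I g} ↔ g ∣ f := by
  rw [← Set.image_singleton, ← map_span, mem_quotient_iff_mem hI, mem_span_singleton]

theorem colon_span_mk_mul_eq_span_mk {R : Type*} [CommRing R] [IsDomain R] {I : Ideal R}
    {a b u : R} (hI : I = span {a * b}) (ha : a ≠ 0) (hb : Prime b) (hu : ¬b ∣ u) :
    (⊥ : Ideal (R ⧸ I)).colon (span {Ideal.Quotient.mk I (u * a)}) =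
      span {Ideal.Quotient.mk I b} := by
  ext x
  obtain ⟨f, rfl⟩ := Ideal.Quotient.mk_surjective x
  have hIb : I ≤ span {b} := hI ▸ span_singleton_le_span_singleton.mpr (dvd_mul_left b a)
  have hmem : ∀ g, g ∈ I ↔ a * b ∣ g := fun g => hI ▸ mem_span_singleton
  rw [mem_colon_span_singleton, mem_bot, ← map_mul, Ideal.Quotient.eq_zero_iff_mem, hmem,
    mk_mem_span_mk_iff hIb, show f * (u * a) = a * (f * u) by ring,
    mul_dvd_mul_iff_left ha, hb.dvd_mul, or_iff_left hu]

theorem span_singleton_ne_of_map_eq_zero {R S : Type*} [CommRing R] [CommRing S] [Nontrivial S]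
    (φ : R →+* S) {a b : R} (ha : φ a ≠ 0) (hb : φ b = 0) : span {a} ≠ span {b} := by
  intro h
  obtain ⟨c, rfl⟩ := mem_span_singleton.mp (h ▸ mem_span_singleton_self a)
  exact ha (by rw [map_mul, hb, zero_mul])

theorem srIdeal_eq_span_xmon (k : Type*) [Field k] {m : ℕ} {Δ : Set (Finset (Fin m))}
    {ρ : Finset (Fin m)} (hρ : ρ ∉ Δ) (hmin : ∀ τ ∉ Δ, ρ ⊆ τ) :
    srIdeal k Δ = span {xmon k ρ} := by
  refine le_antisymm ?_ (span_le.mpr (Set.singleton_subset_iff.mpr (subset_span ⟨ρ, hρ, rfl⟩)))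
  rw [srIdeal, span_le]
  rintro _ ⟨τ, hτ, rfl⟩
  exact mem_span_singleton.mpr (Finset.prod_dvd_prod_of_subset _ _ _ (hmin τ hτ))

theorem xmon_pair (k : Type*) [Field k] {m : ℕ} {i j : Fin m} (hij : i ≠ j) :
    xmon k {i, j} = X i * X j :=
  Finset.prod_pair hij

theorem pair_notMem_Δex : ({1, 2} : Finset (Fin 3)) ∉ Δex := by
  simp only [Δex, Set.mem_insert_iff, Set.mem_singleton_iff]
  decide

theorem pair_subset_of_notMem_Δex : ∀ τ ∉ Δex, ({1, 2} : Finset (Fin 3)) ⊆ τ := by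
  simp only [Δex, Set.mem_insert_iff, Set.mem_singleton_iff]
  decide

theorem srIdeal_Δex (k : Type*) [Field k] : srIdeal k Δex = span {X 1 * X 2} := by
  rw [srIdeal_eq_span_xmon k pair_notMem_Δex pair_subset_of_notMem_Δex, xmon_pair k (by decide)]

/-- for `Δ = {∅,{1},{2},{3},{1,2},{1,3}}` and `σ = {1,2}` one has
`k[Δ] = k[x₁,x₂,x₃]/(x₂x₃)`, `J_σ = (0 : x₁x₂) = (x₃)`, and `(0 : J_σ) = (x₂) ≠ (x_σ)`;
so the conclusion `(0 : J_σ) = (x_σ)` fails for this merely Gorenstein (acyclic) complex. -/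
theorem counterexample_gorenstein_not_star (k : Type*) [Field k] :
    srIdeal k Δex = Ideal.span {X 1 * X 2} ∧
    Jσ k Δex {0, 1} = Ideal.span {Ideal.Quotient.mk (srIdeal k Δex) (X 2)} ∧
    (⊥ : Ideal (SR k Δex)).colon (Jσ k Δex {0, 1}) =
      Ideal.span {Ideal.Quotient.mk (srIdeal k Δex) (X 1)} ∧
    Ideal.span {Ideal.Quotient.mk (srIdeal k Δex) (X 1)} ≠
      Ideal.span {xcls k Δex {0, 1}} := by
  have hsr := srIdeal_Δex k
  have hJ : Jσ k Δex {0, 1} = span {Ideal.Quotient.mk (srIdeal k Δex) (X 2)} := by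
    rw [Jσ, xcls, xmon_pair k (by decide)]
    exact colon_span_mk_mul_eq_span_mk hsr (X_ne_zero 1) X_prime (by rw [X_dvd_X]; decide)
  refine ⟨hsr, hJ, ?_, ?_⟩
  · rw [hJ, ← one_mul (X 2)]
    exact colon_span_mk_mul_eq_span_mk (hsr.trans (by rw [mul_comm])) (X_ne_zero 2) X_prime
      X_prime.not_dvd_one
  · let φ : SR k Δex →+* k := Ideal.Quotient.lift _ (eval ![0, 1, 0]) fun f hf => by
      obtain ⟨c, rfl⟩ := mem_span_singleton.mp (hsr ▸ hf)
      simp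
    exact span_singleton_ne_of_map_eq_zero φ (by simp [φ]) (by simp [φ, xcls, xmon_pair k])
end

section
/- Let Δ be a simplicial complex on {1,...,m} and σ ∈ Δ a face of dimension ≥ 1. Let Δ_σ be the stellar subdivision of Δ on σ, a complex on {1,...,m+1}. Then k[Δ_σ] ≅ k[x₁,...,x_{m+1}]/(I_Δ, x_σ, x_{m+1}u₁, ..., x_{m+1}u_r), where {u₁,...,u_r} is a set of monomials in k[x₁,...,x_m] whose images generate the ideal J_σ = (0 : x_σ) of k[Δ]. -/
set_option synthInstance.maxHeartbeats 1000000
set_option maxHeartbeats 1000000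

open MvPolynomial
/-- The stellar subdivision of `Δ` on `σ`, a complex on `{1, …, m+1}` with new vertex
`m+1` (modeled as `Fin.last m`). -/
def stellar {m : ℕ} (Δ : Set (Finset (Fin m))) (σ : Finset (Fin m)) :
    Set (Finset (Fin (m + 1))) :=
  ((fun τ : Finset (Fin m) => τ.image Fin.castSucc) '' {τ ∈ Δ | ¬ σ ⊆ τ}) ∪
  ((fun τ : Finset (Fin m) => insert (Fin.last m) (τ.image Fin.castSucc)) ''
    {τ | τ ∈ Δ ∧ ¬ σ ⊆ τ ∧ τ ∪ σ ∈ Δ})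

/-!
Both rings are quotients of `k[x₁, …, x_{m+1}]`, so it suffices to compare the ideals.
A non-face of `Δ_σ` avoiding `m+1` is a non-face of `Δ` or contains `σ`, so its monomial lies in
`I_Δ` or is a multiple of `x_σ`. A non-face `τ ∪ {m+1}` is of that kind, or `τ ∪ σ ∉ Δ`; then
`x_τ x_σ ∈ I_Δ`, i.e. the class of `x_τ` lies in `J_σ`, so `x_τ` is a combination of the `uᵢ`
modulo `I_Δ`. Conversely `uᵢ x_σ ∈ I_Δ` for a monomial `uᵢ` means `supp uᵢ ∪ σ ∉ Δ`, which makes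
`supp uᵢ ∪ {m+1}` a non-face of `Δ_σ`.
-/

section SquarefreeMonomial

variable {α : Type*}

theorem Finsupp.sum_single_one_apply [DecidableEq α] (ρ : Finset α) (i : α) :
    (∑ j ∈ ρ, Finsupp.single j 1) i = if i ∈ ρ then 1 else 0 := by
  simp [Finsupp.finsetSum_apply, Finsupp.single_apply]

theorem Finsupp.support_sum_single_one (ρ : Finset α) :
    (∑ j ∈ ρ, Finsupp.single j 1).support = ρ := by
  classical
  ext i
  simp [Finsupp.mem_support_iff, Finsupp.sum_single_one_apply]

theorem Finsupp.sum_single_one_le_iff {ρ : Finset α} {a : α →₀ ℕ} :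
    ∑ j ∈ ρ, Finsupp.single j 1 ≤ a ↔ ρ ⊆ a.support := by
  classical
  simp only [Finsupp.le_def, Finsupp.sum_single_one_apply, Finset.subset_iff,
    Finsupp.mem_support_iff]
  refine ⟨fun h i hi => ?_, fun h i => ?_⟩
  · simpa [hi, Nat.one_le_iff_ne_zero] using h i
  · split_ifs with hi
    · exact Nat.one_le_iff_ne_zero.2 (h hi)
    · exact Nat.zero_le _

variable {k : Type*} [Field k] {n : ℕ}

theorem xmon_eq_monomial (ρ : Finset (Fin n)) :
    xmon k ρ = monomial (∑ i ∈ ρ, Finsupp.single i 1) 1 := by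
  rw [xmon, monomial_sum_one]
  rfl

theorem xmon_mul_xmon_of_subset {σ τ : Finset (Fin n)} (h : σ ⊆ τ) :
    xmon k (τ \ σ) * xmon k σ = xmon k τ :=
  Finset.prod_sdiff h

theorem srIdeal_eq_span_monomial (Δ : Set (Finset (Fin n))) :
    srIdeal k Δ = Ideal.span ((fun s => monomial s (1 : k)) ''
      ((fun ρ => ∑ i ∈ ρ, Finsupp.single i 1) '' {ρ | ρ ∉ Δ})) := by
  rw [srIdeal, Set.image_image]
  exact congrArg Ideal.span (Set.image_congr fun ρ _ => xmon_eq_monomial ρ)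

theorem xmon_mem_srIdeal {Δ : Set (Finset (Fin n))} {ρ : Finset (Fin n)} (h : ρ ∉ Δ) :
    xmon k ρ ∈ srIdeal k Δ :=
  Ideal.subset_span ⟨ρ, h, rfl⟩

theorem monomial_mem_srIdeal {Δ : Set (Finset (Fin n))} {a : Fin n →₀ ℕ}
    (h : a.support ∉ Δ) : monomial a (1 : k) ∈ srIdeal k Δ := by
  classical
  rw [srIdeal_eq_span_monomial, mem_ideal_span_monomial_image]
  intro b hb
  rw [support_monomial, if_neg one_ne_zero, Finset.mem_singleton] at hb
  subst hb
  exact ⟨_, ⟨b.support, h, rfl⟩, Finsupp.sum_single_one_le_iff.2 subset_rfl⟩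

theorem support_notMem_of_monomial_mem_srIdeal {Δ : Set (Finset (Fin n))} (hΔ : IsLowerSet Δ)
    {a : Fin n →₀ ℕ} (h : monomial a (1 : k) ∈ srIdeal k Δ) : a.support ∉ Δ := by
  rw [srIdeal_eq_span_monomial, mem_ideal_span_monomial_image] at h
  obtain ⟨_, ⟨ρ, hρ, rfl⟩, hle⟩ := h a (by simp)
  exact fun ha => hρ (hΔ (Finsupp.sum_single_one_le_iff.1 hle) ha)

theorem xmon_mul_xmon_mem_srIdeal {Δ : Set (Finset (Fin n))} {σ τ : Finset (Fin n)}
    (h : τ ∪ σ ∉ Δ) : xmon k τ * xmon k σ ∈ srIdeal k Δ := by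
  have hunion : xmon k (τ ∪ σ) * xmon k (τ ∩ σ) = xmon k τ * xmon k σ :=
    Finset.prod_union_inter
  exact hunion ▸ Ideal.mul_mem_right _ _ (xmon_mem_srIdeal h)

theorem mk_mem_Jσ_iff {Δ : Set (Finset (Fin n))} {σ : Finset (Fin n)}
    {p : MvPolynomial (Fin n) k} :
    Ideal.Quotient.mk (srIdeal k Δ) p ∈ Jσ k Δ σ ↔ p * xmon k σ ∈ srIdeal k Δ := by
  rw [Jσ, Submodule.mem_colon_span_singleton, smul_eq_mul, xcls, ← map_mul,
    Submodule.mem_bot, Ideal.Quotient.eq_zero_iff_mem]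

end SquarefreeMonomial

section IdealLemmas

variable {R S F : Type*} [CommRing R] [CommRing S] [FunLike F R S] [RingHomClass F R S]

theorem Ideal.mem_span_sup_of_mk_mem_span_image {I : Ideal R} {U : Set R} {p : R}
    (h : Ideal.Quotient.mk I p ∈ Ideal.span (Ideal.Quotient.mk I '' U)) :
    p ∈ Ideal.span U ⊔ I := by
  rw [← Ideal.map_span] at h
  simpa [Ideal.comap_map_of_surjective' _ Ideal.Quotient.mk_surjective, Ideal.mk_ker] using
    Ideal.mem_comap.2 h

theorem Ideal.mul_map_mem_span_image (f : F) (c : S) {U : Set R} {p : R}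
    (hp : p ∈ Ideal.span U) : c * f p ∈ Ideal.span ((fun u => c * f u) '' U) := by
  have hfp : f p ∈ Ideal.span (f '' U) := Ideal.map_span f U ▸ Ideal.mem_map_of_mem f hp
  have := Ideal.mul_mem_mul (Ideal.mem_span_singleton_self c) hfp
  rwa [Ideal.span_mul_span', Set.singleton_mul, Set.image_image] at this

theorem Ideal.mul_map_mem_span_image_sup_map (f : F) (c : S) {U : Set R} {I : Ideal R} {p : R}
    (hp : p ∈ Ideal.span U ⊔ I) :
    c * f p ∈ Ideal.span ((fun u => c * f u) '' U) ⊔ I.map f := by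
  obtain ⟨a, ha, b, hb, rfl⟩ := Submodule.mem_sup.1 hp
  rw [map_add, mul_add]
  exact Ideal.add_mem _ (Ideal.mem_sup_left (Ideal.mul_map_mem_span_image f c ha))
    (Ideal.mem_sup_right (Ideal.mul_mem_left _ c (Ideal.mem_map_of_mem f hb)))

end IdealLemmas

section Stellar

variable {m : ℕ}

theorem Finset.last_notMem_image_castSucc (τ : Finset (Fin m)) :
    Fin.last m ∉ τ.image Fin.castSucc := by
  simp [Fin.castSucc_ne_last]

theorem Finset.exists_eq_image_castSucc_or_eq_insert_last (ρ : Finset (Fin (m + 1))) :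
    ∃ τ : Finset (Fin m),
      ρ = τ.image Fin.castSucc ∨ ρ = insert (Fin.last m) (τ.image Fin.castSucc) := by
  refine ⟨ρ.preimage Fin.castSucc (Fin.castSucc_injective m).injOn, ?_⟩
  by_cases hlast : Fin.last m ∈ ρ
  · right
    ext i
    induction i using Fin.lastCases <;> simp [hlast, Fin.castSucc_ne_last]
  · left
    ext i
    induction i using Fin.lastCases <;> simp [hlast, Fin.castSucc_ne_last]

variable {Δ : Set (Finset (Fin m))} {σ τ : Finset (Fin m)}

theorem image_castSucc_mem_stellar_iff :
    τ.image Fin.castSucc ∈ stellar Δ σ ↔ τ ∈ Δ ∧ ¬ σ ⊆ τ := by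
  refine ⟨?_, fun h => Or.inl ⟨τ, h, rfl⟩⟩
  rintro (⟨τ', h, heq⟩ | ⟨τ', -, heq⟩)
  · rwa [← Finset.image_injective (Fin.castSucc_injective m) heq]
  · exact absurd (heq ▸ Finset.mem_insert_self _ _) (Finset.last_notMem_image_castSucc τ)

theorem insert_last_image_castSucc_mem_stellar_iff :
    insert (Fin.last m) (τ.image Fin.castSucc) ∈ stellar Δ σ ↔
      τ ∈ Δ ∧ ¬ σ ⊆ τ ∧ τ ∪ σ ∈ Δ := by
  refine ⟨?_, fun h => Or.inr ⟨τ, h, rfl⟩⟩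
  rintro (⟨τ', -, heq⟩ | ⟨τ', h, heq⟩)
  · exact (Finset.last_notMem_image_castSucc τ'
      ((show τ'.image Fin.castSucc = _ from heq) ▸ Finset.mem_insert_self _ _)).elim
  · have himage := congrArg (Finset.erase · (Fin.last m)) heq
    simp only [Finset.erase_insert (Finset.last_notMem_image_castSucc _)] at himage
    rwa [← Finset.image_injective (Fin.castSucc_injective m) himage]

end Stellar

section Presentation

variable {k : Type*} [Field k] {m : ℕ}

theorem rename_castSucc_xmon (τ : Finset (Fin m)) :
    rename Fin.castSucc (xmon k τ) = xmon k (τ.image Fin.castSucc) := by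
  rw [xmon, map_prod, xmon, Finset.prod_image fun _ _ _ _ h => Fin.castSucc_injective m h]
  simp only [rename_X]

theorem X_last_mul_rename_castSucc_xmon (τ : Finset (Fin m)) :
    X (Fin.last m) * rename Fin.castSucc (xmon k τ) =
      xmon k (insert (Fin.last m) (τ.image Fin.castSucc)) := by
  rw [rename_castSucc_xmon, xmon, xmon,
    Finset.prod_insert (Finset.last_notMem_image_castSucc τ)]

theorem X_last_mul_rename_castSucc_monomial (s : Fin m →₀ ℕ) :
    X (Fin.last m) * rename Fin.castSucc (monomial s (1 : k)) =
      monomial (Finsupp.single (Fin.last m) 1 + s.mapDomain Fin.castSucc) 1 := by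
  rw [rename_monomial, monomial_single_add, pow_one]

theorem support_single_last_add_mapDomain_castSucc (s : Fin m →₀ ℕ) :
    (Finsupp.single (Fin.last m) 1 + s.mapDomain Fin.castSucc).support =
      insert (Fin.last m) (s.support.image Fin.castSucc) := by
  have hsupp : (s.mapDomain Fin.castSucc).support = s.support.image Fin.castSucc :=
    Finsupp.mapDomain_support_of_injective (Fin.castSucc_injective m) s
  rw [Finsupp.support_add_eq, Finsupp.support_single _ one_ne_zero, hsupp,
    Finset.insert_eq]
  rw [Finsupp.support_single _ one_ne_zero, hsupp, Finset.disjoint_singleton_left]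
  exact Finset.last_notMem_image_castSucc _

variable (k) in
noncomputable def stellarPresentationIdeal (Δ : Set (Finset (Fin m))) (σ : Finset (Fin m))
    (U : Set (MvPolynomial (Fin m) k)) : Ideal (MvPolynomial (Fin (m + 1)) k) :=
  (srIdeal k Δ).map (MvPolynomial.rename (Fin.castSucc : Fin m → Fin (m+1))).toRingHom ⊔
    Ideal.span {MvPolynomial.rename (Fin.castSucc : Fin m → Fin (m+1)) (xmon k σ)} ⊔
    Ideal.span ((fun u => X (Fin.last m) *
      MvPolynomial.rename (Fin.castSucc : Fin m → Fin (m+1)) u) '' U)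

variable {Δ : Set (Finset (Fin m))} {σ τ : Finset (Fin m)} {U : Set (MvPolynomial (Fin m) k)}

theorem rename_castSucc_xmon_mem_stellarPresentationIdeal (h : τ ∉ Δ ∨ σ ⊆ τ) :
    rename Fin.castSucc (xmon k τ) ∈ stellarPresentationIdeal k Δ σ U := by
  refine Ideal.mem_sup_left ?_
  rcases h with hτ | hστ
  · exact Ideal.mem_sup_left (Ideal.mem_map_of_mem _ (xmon_mem_srIdeal hτ))
  · refine Ideal.mem_sup_right
      (Ideal.mem_span_singleton'.2 ⟨rename Fin.castSucc (xmon k (τ \ σ)), ?_⟩)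
    rw [← map_mul, xmon_mul_xmon_of_subset hστ]

theorem X_last_mul_rename_castSucc_xmon_mem_stellarPresentationIdeal
    (hU : Jσ k Δ σ ≤ Ideal.span (Ideal.Quotient.mk (srIdeal k Δ) '' U)) (h : τ ∪ σ ∉ Δ) :
    X (Fin.last m) * rename Fin.castSucc (xmon k τ) ∈ stellarPresentationIdeal k Δ σ U := by
  have hJ : Ideal.Quotient.mk (srIdeal k Δ) (xmon k τ) ∈ Jσ k Δ σ :=
    mk_mem_Jσ_iff.2 (xmon_mul_xmon_mem_srIdeal h)
  have hmem := Ideal.mul_map_mem_span_image_sup_map (rename Fin.castSucc) (X (Fin.last m))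
    (Ideal.mem_span_sup_of_mk_mem_span_image (hU hJ))
  exact (sup_le le_sup_right (le_sup_left.trans le_sup_left) :
    _ ≤ stellarPresentationIdeal k Δ σ U) hmem

theorem srIdeal_stellar_le_stellarPresentationIdeal
    (hU : Jσ k Δ σ ≤ Ideal.span (Ideal.Quotient.mk (srIdeal k Δ) '' U)) :
    srIdeal k (stellar Δ σ) ≤ stellarPresentationIdeal k Δ σ U := by
  rw [srIdeal, Ideal.span_le]
  rintro _ ⟨ρ, hρ, rfl⟩
  simp only [Set.mem_ofPred_eq, SetLike.mem_coe] at hρ ⊢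
  obtain ⟨τ, rfl | rfl⟩ := Finset.exists_eq_image_castSucc_or_eq_insert_last ρ
  · rw [image_castSucc_mem_stellar_iff, not_and_or, not_not] at hρ
    rw [← rename_castSucc_xmon]
    exact rename_castSucc_xmon_mem_stellarPresentationIdeal hρ
  · rw [insert_last_image_castSucc_mem_stellar_iff] at hρ
    rw [← X_last_mul_rename_castSucc_xmon]
    by_cases hτ : τ ∉ Δ ∨ σ ⊆ τ
    · exact Ideal.mul_mem_left _ _ (rename_castSucc_xmon_mem_stellarPresentationIdeal hτ)
    · rw [not_or, not_not] at hτ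
      exact X_last_mul_rename_castSucc_xmon_mem_stellarPresentationIdeal hU
        fun h => hρ ⟨hτ.1, hτ.2, h⟩

theorem X_last_mul_rename_castSucc_monomial_mem_srIdeal_stellar (hΔ : IsLowerSet Δ)
    {s : Fin m →₀ ℕ} (h : monomial s (1 : k) * xmon k σ ∈ srIdeal k Δ) :
    X (Fin.last m) * rename Fin.castSucc (monomial s (1 : k)) ∈ srIdeal k (stellar Δ σ) := by
  rw [xmon_eq_monomial, monomial_mul, one_mul] at h
  have hsupp : s.support ∪ σ ∉ Δ := by
    simpa [Finsupp.support_add_eq_union, Finsupp.support_sum_single_one] using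
      support_notMem_of_monomial_mem_srIdeal hΔ h
  rw [X_last_mul_rename_castSucc_monomial]
  refine monomial_mem_srIdeal ?_
  rw [support_single_last_add_mapDomain_castSucc, insert_last_image_castSucc_mem_stellar_iff]
  exact fun hmem => hsupp hmem.2.2

theorem stellarPresentationIdeal_le_srIdeal_stellar (hΔ : IsLowerSet Δ)
    (hUmon : ∀ u ∈ U, ∃ s : Fin m →₀ ℕ, u = monomial s 1)
    (hU : ∀ u ∈ U, u * xmon k σ ∈ srIdeal k Δ) :
    stellarPresentationIdeal k Δ σ U ≤ srIdeal k (stellar Δ σ) := by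
  refine sup_le (sup_le ?_ ?_) ?_
  · rw [srIdeal, Ideal.map_span, Ideal.span_le]
    rintro _ ⟨_, ⟨ρ, hρ, rfl⟩, rfl⟩
    rw [SetLike.mem_coe, AlgHom.toRingHom_eq_coe, RingHom.coe_coe, rename_castSucc_xmon]
    exact xmon_mem_srIdeal fun h => hρ (image_castSucc_mem_stellar_iff.1 h).1
  · rw [Ideal.span_le, Set.singleton_subset_iff, SetLike.mem_coe, rename_castSucc_xmon]
    exact xmon_mem_srIdeal fun h => (image_castSucc_mem_stellar_iff.1 h).2 subset_rfl
  · rw [Ideal.span_le]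
    rintro _ ⟨u, hu, rfl⟩
    obtain ⟨s, rfl⟩ := hUmon u hu
    exact X_last_mul_rename_castSucc_monomial_mem_srIdeal_stellar hΔ (hU _ hu)

theorem srIdeal_stellar_eq (hΔ : IsLowerSet Δ)
    (hUmon : ∀ u ∈ U, ∃ s : Fin m →₀ ℕ, u = monomial s 1)
    (hU : Ideal.span (Ideal.Quotient.mk (srIdeal k Δ) '' U) = Jσ k Δ σ) :
    srIdeal k (stellar Δ σ) = stellarPresentationIdeal k Δ σ U :=
  le_antisymm (srIdeal_stellar_le_stellarPresentationIdeal hU.ge)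
    (stellarPresentationIdeal_le_srIdeal_stellar hΔ hUmon fun u hu =>
      mk_mem_Jσ_iff.1 (hU ▸ Ideal.subset_span ⟨u, hu, rfl⟩))

end Presentation

theorem sr_stellar_presentation_general (k : Type*) [Field k] {m : ℕ} (Δ : Set (Finset (Fin m)))
    (hΔ : IsComplex Δ) (σ : Finset (Fin m))
    (U : Set (MvPolynomial (Fin m) k))
    (hUmon : ∀ p ∈ U, ∃ s : Fin m →₀ ℕ, p = MvPolynomial.monomial s 1)
    (hU : Ideal.span (Ideal.Quotient.mk (srIdeal k Δ) '' U) = Jσ k Δ σ) :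
    Nonempty (SR k (stellar Δ σ) ≃ₐ[k]
      (MvPolynomial (Fin (m + 1)) k ⧸
        ((srIdeal k Δ).map (MvPolynomial.rename (Fin.castSucc : Fin m → Fin (m+1))).toRingHom ⊔
         Ideal.span {MvPolynomial.rename (Fin.castSucc : Fin m → Fin (m+1)) (xmon k σ)} ⊔
         Ideal.span ((fun u => X (Fin.last m) *
            MvPolynomial.rename (Fin.castSucc : Fin m → Fin (m+1)) u) '' U)))) :=
  ⟨Ideal.quotientEquivAlgOfEq k
    (srIdeal_stellar_eq (fun _ _ hts hs => hΔ.2 hs hts) hUmon hU)⟩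

/-- presentation of the Stanley–Reisner ring of a stellar subdivision:
`k[Δ_σ] ≅ k[x₁,…,x_{m+1}]/(I_Δ, x_σ, x_{m+1}u₁, …, x_{m+1}u_r)` where the monomials
`u₁,…,u_r` generate `J_σ = (0 : x_σ)` in `k[Δ]`. -/
theorem sr_stellar_presentation (k : Type*) [Field k] {m : ℕ} (Δ : Set (Finset (Fin m)))
    (hΔ : IsComplex Δ) (σ : Finset (Fin m)) (hσ : σ ∈ Δ) (hcard : 2 ≤ σ.card)
    (U : Set (MvPolynomial (Fin m) k))
    (hUmon : ∀ p ∈ U, ∃ s : Fin m →₀ ℕ, p = MvPolynomial.monomial s 1)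
    (hU : Ideal.span (Ideal.Quotient.mk (srIdeal k Δ) '' U) = Jσ k Δ σ) :
    Nonempty (SR k (stellar Δ σ) ≃ₐ[k]
      (MvPolynomial (Fin (m + 1)) k ⧸
        ((srIdeal k Δ).map (MvPolynomial.rename (Fin.castSucc : Fin m → Fin (m+1))).toRingHom ⊔
         Ideal.span {MvPolynomial.rename (Fin.castSucc : Fin m → Fin (m+1)) (xmon k σ)} ⊔
         Ideal.span ((fun u => X (Fin.last m) *
            MvPolynomial.rename (Fin.castSucc : Fin m → Fin (m+1)) u) '' U)))) :=
  sr_stellar_presentation_general k Δ hΔ σ U hUmon hU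
end

section
/- For the ring S = k[x₁,x₂,x₃,x₄,z]/(x₄z − x₁x₂, x₄x₃) over a field k and any a ∈ k with a ≠ 0, the quotient S/(z − a) is isomorphic as a k-algebra to k[x₁,x₂,x₃]/(x₁x₂x₃). -/
open MvPolynomial

/-- The Kustin–Miller unprojection ideal `(x₄z − x₁x₂, x₄x₃)` in `k[x₁,…,x₄,z]`
(variables `x₁,x₂,x₃,x₄,z` modeled as indices `0,1,2,3,4` of `Fin 5`). -/
noncomputable def kmIdealEx (k : Type*) [Field k] : Ideal (MvPolynomial (Fin 5) k) :=
  Ideal.span {X 3 * X 4 - X 0 * X 1, X 3 * X 2}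

/-!
Once `z = a` with `a` invertible, the first relation reads `x₄ = a⁻¹x₁x₂`, so `x₄` and `z` can be
eliminated and the second relation `x₄x₃` becomes `a⁻¹x₁x₂x₃`. Conversely
`x₁x₂x₃ = z · x₄x₃ − x₃ (x₄z − x₁x₂)` already vanishes in `S`. Hence the substitution
`x₄ ↦ a⁻¹x₁x₂, z ↦ a` and the inclusion `k[x₁,x₂,x₃] → k[x₁,…,x₄,z]` induce mutually inverse
isomorphisms.
-/

noncomputable def Ideal.quotQuotSpanMkEquivQuotSup (R : Type*) {A : Type*} [CommSemiring R]
    [CommRing A] [Algebra R A] (I : Ideal A) (x : A) :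
    ((A ⧸ I) ⧸ Ideal.span {Ideal.Quotient.mk I x}) ≃ₐ[R] A ⧸ I ⊔ Ideal.span {x} :=
  (Ideal.quotientEquivAlgOfEq R (by rw [Ideal.map_span, Set.image_singleton]; rfl)).trans
    (DoubleQuot.quotQuotEquivQuotSupₐ R I _)

namespace KustinMiller

variable {k : Type*} [Field k]

noncomputable def fiberIdeal (a : k) : Ideal (MvPolynomial (Fin 5) k) :=
  kmIdealEx k ⊔ Ideal.span {X 4 - C a}

variable (k) in
noncomputable def triangleIdeal : Ideal (MvPolynomial (Fin 3) k) :=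
  Ideal.span {X 0 * X 1 * X 2}

section Fiber

variable {a : k}

local notation "π" => Ideal.Quotient.mk (fiberIdeal a)

lemma X_three_mul_X_four_sub_mem_fiberIdeal : X 3 * X 4 - X 0 * X 1 ∈ fiberIdeal a :=
  Ideal.mem_sup_left (Ideal.subset_span (by simp))

lemma X_three_mul_X_two_mem_fiberIdeal : X 3 * X 2 ∈ fiberIdeal a :=
  Ideal.mem_sup_left (Ideal.subset_span (by simp))

lemma X_four_sub_C_mem_fiberIdeal : X 4 - C a ∈ fiberIdeal a :=
  Ideal.mem_sup_right (Ideal.subset_span rfl)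

lemma mk_X_four : π (X 4) = algebraMap k _ a := by
  rw [← Ideal.Quotient.mk_algebraMap, algebraMap_eq]
  exact Ideal.Quotient.eq.2 X_four_sub_C_mem_fiberIdeal

lemma mk_X_three (ha : a ≠ 0) : π (X 3) = algebraMap k _ a⁻¹ * (π (X 0) * π (X 1)) := by
  have h : π (X 3) * algebraMap k _ a = π (X 0) * π (X 1) := by
    rw [← mk_X_four, ← map_mul, ← map_mul]
    exact Ideal.Quotient.eq.2 X_three_mul_X_four_sub_mem_fiberIdeal
  rw [← h, mul_left_comm, ← map_mul, inv_mul_cancel₀ ha, map_one, mul_one]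

lemma mk_X_zero_mul_X_one_mul_X_two : π (X 0 * X 1 * X 2) = 0 := by
  have h₁ : π (X 0 * X 1) = π (X 3 * X 4) :=
    (Ideal.Quotient.eq.2 X_three_mul_X_four_sub_mem_fiberIdeal).symm
  have h₂ : π (X 3 * X 2) = 0 := Ideal.Quotient.eq_zero_iff_mem.2 X_three_mul_X_two_mem_fiberIdeal
  calc π (X 0 * X 1 * X 2) = π (X 3 * X 4) * π (X 2) := by rw [map_mul, h₁]
    _ = π (X 4) * π (X 3 * X 2) := by simp only [map_mul]; ring
    _ = 0 := by rw [h₂, mul_zero]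

end Fiber

noncomputable def eliminationHom (a : k) : MvPolynomial (Fin 5) k →ₐ[k] MvPolynomial (Fin 3) k :=
  aeval ![X 0, X 1, X 2, C a⁻¹ * (X 0 * X 1), C a]

variable (k) in
noncomputable abbrev inclusionHom : MvPolynomial (Fin 3) k →ₐ[k] MvPolynomial (Fin 5) k :=
  rename (Fin.castLE (by decide))

lemma eliminationHom_comp_inclusionHom (a : k) :
    (eliminationHom a).comp (inclusionHom k) = AlgHom.id k _ :=
  MvPolynomial.algHom_ext fun i => by fin_cases i <;> simp [eliminationHom]

lemma fiberIdeal_le_comap_eliminationHom {a : k} (ha : a ≠ 0) :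
    fiberIdeal a ≤ (triangleIdeal k).comap (eliminationHom a) := by
  have hCa : C a⁻¹ * C a = (1 : MvPolynomial (Fin 3) k) := by
    rw [← C_mul, inv_mul_cancel₀ ha, C_1]
  have hmem : X 0 * X 1 * X 2 ∈ triangleIdeal k := Ideal.subset_span rfl
  simp only [fiberIdeal, kmIdealEx, sup_le_iff, Ideal.span_le, Set.insert_subset_iff,
    Set.singleton_subset_iff, SetLike.mem_coe, Ideal.mem_comap]
  refine ⟨⟨?_, ?_⟩, ?_⟩
  · convert (triangleIdeal k).zero_mem
    simp only [eliminationHom, map_sub, map_mul, aeval_X, Matrix.cons_val]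
    linear_combination X 0 * X 1 * hCa
  · convert (triangleIdeal k).mul_mem_left (C a⁻¹) hmem using 1
    simp only [eliminationHom, map_mul, aeval_X, Matrix.cons_val]
    ring
  · convert (triangleIdeal k).zero_mem
    simp [eliminationHom]

lemma triangleIdeal_le_comap_inclusionHom (a : k) :
    triangleIdeal k ≤ (fiberIdeal a).comap (inclusionHom k) := by
  rw [triangleIdeal, Ideal.span_le, Set.singleton_subset_iff, SetLike.mem_coe, Ideal.mem_comap,
    ← Ideal.Quotient.eq_zero_iff_mem]
  simpa using mk_X_zero_mul_X_one_mul_X_two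

noncomputable def fiberEquivTriangle {a : k} (ha : a ≠ 0) :
    (MvPolynomial (Fin 5) k ⧸ fiberIdeal a) ≃ₐ[k] MvPolynomial (Fin 3) k ⧸ triangleIdeal k :=
  AlgEquiv.ofAlgHom
    (Ideal.quotientMapₐ _ (eliminationHom a) (fiberIdeal_le_comap_eliminationHom ha))
    (Ideal.quotientMapₐ _ (inclusionHom k) (triangleIdeal_le_comap_inclusionHom a))
    (Ideal.Quotient.algHom_ext k <| by
      rw [AlgHom.comp_assoc, Ideal.quotient_map_comp_mkₐ, ← AlgHom.comp_assoc,
        Ideal.quotient_map_comp_mkₐ, AlgHom.comp_assoc, eliminationHom_comp_inclusionHom,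
        AlgHom.comp_id, AlgHom.id_comp])
    (Ideal.Quotient.algHom_ext k <| MvPolynomial.algHom_ext fun i => by
      fin_cases i <;> simp [eliminationHom, Ideal.quotient_map_mkₐ, mk_X_three ha, mk_X_four])

end KustinMiller

/-- for `S = k[x₁,…,x₄,z]/(x₄z − x₁x₂, x₄x₃)` and `a ∈ k`, `a ≠ 0`,
one has `S/(z − a) ≅ k[x₁,x₂,x₃]/(x₁x₂x₃)` as `k`-algebras. -/
theorem km_fiber_iso_triangle (k : Type*) [Field k] (a : k) (ha : a ≠ 0) :
    Nonempty (((MvPolynomial (Fin 5) k ⧸ kmIdealEx k) ⧸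
        Ideal.span {Ideal.Quotient.mk (kmIdealEx k) (X 4 - MvPolynomial.C a)}) ≃ₐ[k]
      (MvPolynomial (Fin 3) k ⧸ (Ideal.span {X 0 * X 1 * X 2} : Ideal (MvPolynomial (Fin 3) k)))) :=
  ⟨(Ideal.quotQuotSpanMkEquivQuotSup k _ _).trans (KustinMiller.fiberEquivTriangle ha)⟩
end
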